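/- arXiv:2305.17543 — 3 statements merged into one kernel-verified Lean document; each statement's English description precedes it below -/
import Mathlib

section
/- Let r ≥ 1 and n ≥ 0 be integers, and let λ be a partition with |λ| = n(r+1), ℓ(λ) ≤ r, and λ_r ≥ n. Let μ = (λ_1 − λ_r, λ_2 − λ_r, …, λ_{r−1} − λ_r) be the partition obtained from λ by deleting its first λ_r columns (each of height r). Then the Kostka number K_{λ,(n)^{r+1}} equals the number of SSYT of shape μ with entries in {1, …, r}. -/
/-!
Fix `c` with `n ≤ c ≤ λ_r`. In an SSYT `T` of shape `λ` with entries in `{1, …, r + 1}`, the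
first `c` columns have height `r`, so row `i` of them only holds the values `i + 1` and `i + 2`.
The value `1` occurs only in row `0` and at most `n ≤ c` times, so every entry right of these
columns is at least `2`; lowering those entries by one gives an SSYT `S` of shape `μ` with
entries in `{1, …, r}`. Conversely, given `S`, the requirement that each value occurs `n` times
determines the number of entries `i + 1` in row `i` of the first `c` columns, one value at a
time, and the numbers so obtained decrease down the rows, so they always glue to a valid `T`.
-/
open Finset

/-- A filling `T` of the Young diagram of `lam` (0-indexed rows and columns, with
junk value `0` outside the diagram) is a semistandard Young tableau. -/
def IsSSYT (lam : ℕ → ℕ) (T : ℕ → ℕ → ℕ) : Prop :=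
  (∀ i j, j < lam i → 1 ≤ T i j) ∧
  (∀ i j, j + 1 < lam i → T i j ≤ T i (j + 1)) ∧
  (∀ i j, j < lam (i + 1) → T i j < T (i + 1) j) ∧
  (∀ i j, lam i ≤ j → T i j = 0)

/-- The number of occurrences of the value `v` in the filling `T` of the diagram of `lam`. -/
noncomputable def content (lam : ℕ → ℕ) (T : ℕ → ℕ → ℕ) (v : ℕ) : ℕ :=
  Set.ncard {p : ℕ × ℕ | p.2 < lam p.1 ∧ T p.1 p.2 = v}

/-- The Kostka number `K_{lam, (n)^m}`: the number of SSYT of shape `lam` in which each of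
the values `1, …, m` occurs exactly `n` times and no other values occur. -/
noncomputable def kostka (lam : ℕ → ℕ) (n m : ℕ) : ℕ :=
  Set.ncard {T : ℕ → ℕ → ℕ | IsSSYT lam T ∧ (∀ i j, j < lam i → T i j ≤ m) ∧
    ∀ v, 1 ≤ v → v ≤ m → content lam T v = n}

/-- The number of SSYT of shape `lam` with entries in `{1, …, r}`. -/
noncomputable def ssytCount (lam : ℕ → ℕ) (r : ℕ) : ℕ :=
  Set.ncard {T : ℕ → ℕ → ℕ | IsSSYT lam T ∧ ∀ i j, j < lam i → T i j ≤ r}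

/-- The number of SSYT of shape `lam` with entries in `{1, …, r}` and content `mu`
(the value `v+1` occurring exactly `mu v` times, `v : Fin r`). -/
noncomputable def kostkaC (lam : ℕ → ℕ) (r : ℕ) (mu : Fin r → ℕ) : ℕ :=
  Set.ncard {T : ℕ → ℕ → ℕ | IsSSYT lam T ∧ (∀ i j, j < lam i → T i j ≤ r) ∧
    ∀ v : Fin r, content lam T ((v : ℕ) + 1) = mu v}

/-- The Schur polynomial `s_lam(x_1, …, x_r)`, where `w = |lam|` is the weight of `lam`:
the generating function of SSYT of shape `lam` with entries in `{1, …, r}` by content. -/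
noncomputable def schur (r : ℕ) (lam : ℕ → ℕ) (w : ℕ) : MvPolynomial (Fin r) ℤ :=
  ∑ mu ∈ Fintype.piFinset (fun _ : Fin r => Finset.range (w + 1)),
    (kostkaC lam r mu : ℤ) • ∏ i, MvPolynomial.X i ^ mu i

/-- `κ_lam = 2 Σ_{i ≥ 1} Σ_{j=1}^{lam_i} (j - i)`, computed for a partition of length `≤ r`
(rows are 0-indexed, so row `i` of the function is row `i+1` of the partition). -/
def kappa (r : ℕ) (lam : ℕ → ℕ) : ℤ :=
  2 * ∑ i ∈ Finset.range r, ∑ j ∈ Finset.Icc 1 (lam i), ((j : ℤ) - ((i : ℤ) + 1))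

namespace Nat

theorem count_congr_of_lt {p q : ℕ → Prop} [DecidablePred p] [DecidablePred q] {n : ℕ}
    (h : ∀ k < n, (p k ↔ q k)) : count p n = count q n :=
  le_antisymm (count_mono_left fun k hk => (h k hk).1) (count_mono_left fun k hk => (h k hk).2)

theorem count_const (P : Prop) [Decidable P] (n : ℕ) :
    count (fun _ => P) n = if P then n else 0 := by
  split_ifs with hP
  · exact count_of_forall fun _ _ => hP
  · exact count_of_forall_not fun _ _ => hP

theorem count_ite_lt_eq {a c : ℕ} (hac : a ≤ c) (x y v : ℕ) :
    count (fun j => (if j < a then x else y) = v) c =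
      (if x = v then a else 0) + (if y = v then c - a else 0) := by
  obtain ⟨d, rfl⟩ := Nat.exists_eq_add_of_le hac
  have hleft : count (fun j => (if j < a then x else y) = v) a = count (fun _ => x = v) a :=
    count_congr_of_lt fun k hk => by rw [if_pos hk]
  have hright : count (fun k => (if a + k < a then x else y) = v) d = count (fun _ => y = v) d :=
    count_congr_of_lt fun k _ => by rw [if_neg (by omega)]
  rw [count_add, hleft, hright, count_const, count_const, Nat.add_sub_cancel_left]

theorem eq_iff_lt_count_of_monotoneOn {f : ℕ → ℕ} {c v j : ℕ}
    (hf : MonotoneOn f (Set.Iio c)) (hv : ∀ j < c, v ≤ f j) (hj : j < c) :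
    f j = v ↔ j < count (fun k => f k = v) c := by
  constructor
  · intro hfj
    have hpre : count (fun k => f k = v) (j + 1) = j + 1 :=
      count_of_forall fun k hk =>
        le_antisymm (hfj ▸ hf (Set.mem_Iio.2 (by omega)) hj (by omega)) (hv k (by omega))
    exact lt_of_lt_of_le (hpre ▸ Nat.lt_succ_self j) (count_monotone _ hj)
  · intro hlt
    by_contra hfj
    have htail : count (fun k => f (j + k) = v) (c - j) = 0 :=
      count_of_forall_not fun k hk h => by
        have := hf hj (Set.mem_Iio.2 (by omega)) (Nat.le_add_right j k)
        have := hv j hj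
        omega
    have := count_add (fun k => f k = v) j (c - j)
    rw [Nat.add_sub_cancel' hj.le, htail] at this
    have := count_le (p := fun k => f k = v) (n := j)
    omega

end Nat

namespace IsSSYT

variable {lam : ℕ → ℕ} {T : ℕ → ℕ → ℕ}

theorem row_mono (hT : IsSSYT lam T) {i j k : ℕ} (hjk : j ≤ k) (hk : k < lam i) :
    T i j ≤ T i k := by
  induction k, hjk using Nat.le_induction with
  | base => exact le_rfl
  | succ k hjk ih => exact (ih (by omega)).trans (hT.2.1 i k hk)

theorem add_le_below (hT : IsSSYT lam T) (hlam : Antitone lam) {i j : ℕ} :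
    ∀ {d : ℕ}, j < lam (i + d) → T i j + d ≤ T (i + d) j := by
  intro d
  induction d with
  | zero => intro; exact le_rfl
  | succ d ih =>
    intro hj
    rw [← Nat.add_assoc] at hj
    show T i j + (d + 1) ≤ T (i + d + 1) j
    have := ih (lt_of_lt_of_le hj (hlam (by omega)))
    have := hT.2.2.1 (i + d) j hj
    omega

theorem row_lt (hT : IsSSYT lam T) (hlam : Antitone lam) {i j : ℕ} (hj : j < lam i) :
    i < T i j := by
  have h0 := hT.1 0 j (lt_of_lt_of_le hj (hlam (Nat.zero_le i)))
  have := hT.add_le_below hlam (i := 0) (d := i) (by simpa using hj)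
  simp only [Nat.zero_add] at this
  omega

end IsSSYT

theorem content_eq_sum_count {lam : ℕ → ℕ} {r : ℕ} (hlen : ∀ i, r ≤ i → lam i = 0)
    (T : ℕ → ℕ → ℕ) (v : ℕ) :
    content lam T v = ∑ i ∈ range r, Nat.count (fun j => T i j = v) (lam i) := by
  have hset : {p : ℕ × ℕ | p.2 < lam p.1 ∧ T p.1 p.2 = v} =
      ↑(((range r).sigma fun i => (range (lam i)).filter (T i · = v)).map
        (Equiv.sigmaEquivProd ℕ ℕ).toEmbedding) := by
    ext ⟨i, j⟩
    simp only [Set.mem_ofPred_eq, coe_map, Equiv.coe_toEmbedding, Set.mem_image, mem_coe,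
      mem_sigma, mem_range, mem_filter, Sigma.exists, Equiv.sigmaEquivProd_apply, Prod.mk.injEq]
    constructor
    · rintro ⟨hj, hv⟩
      exact ⟨i, j, ⟨by by_contra h; have := hlen i (by omega); omega, hj, hv⟩, rfl, rfl⟩
    · rintro ⟨i, j, ⟨-, hj, hv⟩, rfl, rfl⟩
      exact ⟨hj, hv⟩
  simp only [content, hset, Set.ncard_coe_finset, card_map, card_sigma,
    Nat.count_eq_card_filter_range]

theorem sum_content {lam : ℕ → ℕ} {r m : ℕ} (hlen : ∀ i, r ≤ i → lam i = 0)
    {T : ℕ → ℕ → ℕ} (hT : ∀ i j, j < lam i → T i j ≤ m) :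
    ∑ v ∈ range (m + 1), content lam T v = ∑ i ∈ range r, lam i := by
  simp only [content_eq_sum_count hlen, Nat.count_eq_card_filter_range]
  rw [sum_comm]
  refine sum_congr rfl fun i _ => ?_
  rw [← card_eq_sum_card_fiberwise fun j hj => ?_, card_range]
  simpa [Nat.lt_succ_iff] using hT i j (by simpa using hj)

theorem IsSSYT.two_le_of_content_one_le {lam : ℕ → ℕ} {T : ℕ → ℕ → ℕ} {r c i j : ℕ}
    (hT : IsSSYT lam T) (hlam : Antitone lam) (hlen : ∀ i, r ≤ i → lam i = 0)
    (hone : content lam T 1 ≤ c) (hcj : c ≤ j) (hj : j < lam i) : 2 ≤ T i j := by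
  by_contra hlt
  have hi : i = 0 := by have := hT.row_lt hlam hj; omega
  subst hi
  have hr : 0 < r := by by_contra h; have := hlen 0 (by omega); omega
  have hprefix : Nat.count (fun k => T 0 k = 1) (j + 1) = j + 1 :=
    Nat.count_of_forall fun k hk => by
      have := hT.row_mono (show k ≤ j by omega) hj
      have := hT.1 0 k (by omega)
      omega
  have hrow : j + 1 ≤ Nat.count (fun k => T 0 k = 1) (lam 0) :=
    hprefix ▸ Nat.count_monotone _ hj
  have : Nat.count (fun k => T 0 k = 1) (lam 0) ≤ content lam T 1 := by
    rw [content_eq_sum_count hlen]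
    exact single_le_sum (f := fun i => Nat.count (fun k => T i k = 1) (lam i))
      (fun _ _ => Nat.zero_le _) (mem_range.2 hr)
  omega

/-- Row `i` of the `c` new columns holds `b (i + 1)` entries `i + 1`, then entries `i + 2`;
so `b k` is the number of entries `k` in row `k - 1` of these columns. -/
def attachColumns (c : ℕ) (b lam : ℕ → ℕ) (S : ℕ → ℕ → ℕ) : ℕ → ℕ → ℕ :=
  fun i j =>
    if j < lam i then
      if j < c then (if j < b (i + 1) then i + 1 else i + 2) else S i (j - c) + 1
    else 0

def deleteColumns (c : ℕ) (lam : ℕ → ℕ) (T : ℕ → ℕ → ℕ) : ℕ → ℕ → ℕ :=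
  fun i j => if j < lam i - c then T i (j + c) - 1 else 0

section AttachColumns

variable {r c : ℕ} {b lam : ℕ → ℕ} {S : ℕ → ℕ → ℕ}

theorem attachColumns_of_lt_of_lt {i j : ℕ} (hj : j < lam i) (hjc : j < c) :
    attachColumns c b lam S i j = if j < b (i + 1) then i + 1 else i + 2 := by
  rw [attachColumns, if_pos hj, if_pos hjc]

theorem attachColumns_add {i j : ℕ} (hj : j < lam i - c) :
    attachColumns c b lam S i (c + j) = S i j + 1 := by
  rw [attachColumns, if_pos (by omega), if_neg (by omega), Nat.add_sub_cancel_left]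

theorem isSSYT_attachColumns (hlam : Antitone lam) (hb : Antitone b)
    (hS : IsSSYT (fun i => lam i - c) S) : IsSSYT lam (attachColumns c b lam S) := by
  have hmu : Antitone fun i => lam i - c := fun i k hik => Nat.sub_le_sub_right (hlam hik) c
  refine ⟨fun i j hj => ?_, fun i j hj => ?_, fun i j hj => ?_, fun i j hj => ?_⟩
  · unfold attachColumns
    split_ifs <;> omega
  · rcases Nat.lt_or_ge (j + 1) c with hjc | hjc
    · rw [attachColumns_of_lt_of_lt (by omega) (by omega), attachColumns_of_lt_of_lt hj hjc]
      split_ifs <;> omega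
    rcases Nat.lt_or_ge j c with hjc' | hjc'
    · have := hS.row_lt hmu (i := i) (j := 0) (by omega)
      have hc : c + 0 = j + 1 := by omega
      rw [attachColumns_of_lt_of_lt (by omega) hjc', ← hc, attachColumns_add (by omega)]
      split_ifs <;> omega
    · have := hS.2.1 i (j - c) (by beta_reduce; omega)
      rw [show j = c + (j - c) by omega, show c + (j - c) + 1 = c + (j - c + 1) by omega,
        attachColumns_add (by omega), attachColumns_add (by omega)]
      omega
  · have hji : j < lam i := lt_of_lt_of_le hj (hlam (Nat.le_succ i))
    rcases Nat.lt_or_ge j c with hjc | hjc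
    · have := hb (show i + 1 ≤ i + 1 + 1 by omega)
      rw [attachColumns_of_lt_of_lt hji hjc, attachColumns_of_lt_of_lt hj hjc]
      split_ifs <;> omega
    · have := hS.2.2.1 i (j - c) (by beta_reduce; omega)
      rw [show j = c + (j - c) by omega, attachColumns_add (by omega), attachColumns_add (by omega)]
      omega
  · rw [attachColumns, if_neg (by omega)]

theorem attachColumns_le (hlen : ∀ i, r ≤ i → lam i = 0)
    (hS : ∀ i j, j < lam i - c → S i j ≤ r) {i j : ℕ} (hj : j < lam i) :
    attachColumns c b lam S i j ≤ r + 1 := by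
  have hi : i < r := by by_contra h; have := hlen i (by omega); omega
  have := hS i (j - c)
  unfold attachColumns
  split_ifs <;> omega

theorem deleteColumns_attachColumns (hS : ∀ i j, lam i - c ≤ j → S i j = 0) :
    deleteColumns c lam (attachColumns c b lam S) = S := by
  funext i j
  by_cases hj : j < lam i - c
  · rw [deleteColumns, if_pos hj, Nat.add_comm, attachColumns_add hj, Nat.add_sub_cancel]
  · rw [deleteColumns, if_neg hj, hS i j (by omega)]

theorem content_attachColumns (hlen : ∀ i, r ≤ i → lam i = 0) (hc : ∀ i < r, c ≤ lam i)
    (hb : Antitone b) (hb0 : b 0 = c) (hbr : b (r + 1) = 0) {k : ℕ} (hk : 1 ≤ k)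
    (hkr : k ≤ r + 1) :
    content lam (attachColumns c b lam S) k =
      b k + (c - b (k - 1)) + content (fun i => lam i - c) S (k - 1) := by
  have hbc : ∀ i, b i ≤ c := fun i => hb0 ▸ hb (Nat.zero_le i)
  have hrow : ∀ i < r, Nat.count (fun j => attachColumns c b lam S i j = k) (lam i) =
      ((if i + 1 = k then b (i + 1) else 0) + (if i + 2 = k then c - b (i + 1) else 0)) +
        Nat.count (fun j => S i j = k - 1) (lam i - c) := by
    intro i hi
    have hleft : Nat.count (fun j => attachColumns c b lam S i j = k) c =
        Nat.count (fun j => (if j < b (i + 1) then i + 1 else i + 2) = k) c :=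
      Nat.count_congr_of_lt fun j hj => by
        rw [attachColumns_of_lt_of_lt (lt_of_lt_of_le hj (hc i hi)) hj]
    have hright : Nat.count (fun j => attachColumns c b lam S i (c + j) = k) (lam i - c) =
        Nat.count (fun j => S i j = k - 1) (lam i - c) :=
      Nat.count_congr_of_lt fun j hj => by rw [attachColumns_add hj]; omega
    rw [← Nat.add_sub_cancel' (hc i hi), Nat.count_add, Nat.add_sub_cancel_left, hleft, hright,
      Nat.count_ite_lt_eq (hbc _)]
  have hsum₁ : ∑ i ∈ range r, (if i + 1 = k then b (i + 1) else 0) = b k := by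
    rcases Nat.lt_or_ge k (r + 1) with hk' | hk'
    · rw [sum_eq_single (k - 1) (fun i _ hi => if_neg (by omega)) (fun h => by rw [mem_range] at h; omega),
        if_pos (by omega), Nat.sub_add_cancel hk]
    · rw [sum_eq_zero fun i hi => if_neg (by rw [mem_range] at hi; omega), show k = r + 1 by omega, hbr]
  have hsum₂ : ∑ i ∈ range r, (if i + 2 = k then c - b (i + 1) else 0) = c - b (k - 1) := by
    rcases Nat.lt_or_ge 1 k with hk' | hk'
    · rw [sum_eq_single (k - 2) (fun i _ hi => if_neg (by omega)) (fun h => by rw [mem_range] at h; omega),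
        if_pos (by omega), show k - 2 + 1 = k - 1 by omega]
    · rw [sum_eq_zero fun i _ => if_neg (by omega), show k - 1 = 0 by omega, hb0, Nat.sub_self]
  have hmu : ∀ i, r ≤ i → lam i - c = 0 := fun i hi => by rw [hlen i hi, Nat.zero_sub]
  rw [content_eq_sum_count hlen, content_eq_sum_count hmu, sum_congr rfl fun i hi => hrow i
    (mem_range.1 hi), sum_add_distrib, sum_add_distrib, hsum₁, hsum₂]

theorem attachColumns_eq_of_content {b' : ℕ → ℕ} (hlen : ∀ i, r ≤ i → lam i = 0)
    (hc : ∀ i < r, c ≤ lam i) (hb : Antitone b) (hb' : Antitone b') (hb0 : b 0 = c)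
    (hb0' : b' 0 = c) (hbr : b (r + 1) = 0) (hbr' : b' (r + 1) = 0)
    (h : ∀ k, 1 ≤ k → k ≤ r + 1 →
      content lam (attachColumns c b lam S) k = content lam (attachColumns c b' lam S) k) :
    attachColumns c b lam S = attachColumns c b' lam S := by
  have heq : ∀ k ≤ r, b k = b' k := by
    intro k
    induction k with
    | zero => exact fun _ => hb0.trans hb0'.symm
    | succ k ih =>
      intro hk
      have hck := h (k + 1) (by omega) (by omega)
      rw [content_attachColumns hlen hc hb hb0 hbr (by omega) (by omega),
        content_attachColumns hlen hc hb' hb0' hbr' (by omega) (by omega),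
        Nat.add_sub_cancel, ih (by omega)] at hck
      omega
  funext i j
  by_cases hi : i < r
  · rw [attachColumns, attachColumns, heq (i + 1) hi]
  · simp [attachColumns, hlen i (by omega)]

end AttachColumns

section DeleteColumns

variable {r c : ℕ} {lam : ℕ → ℕ} {T : ℕ → ℕ → ℕ}

theorem isSSYT_deleteColumns (hT : IsSSYT lam T) (hlam : Antitone lam)
    (hlen : ∀ i, r ≤ i → lam i = 0) (hone : content lam T 1 ≤ c) :
    IsSSYT (fun i => lam i - c) (deleteColumns c lam T) := by
  have htwo : ∀ i j, j < lam i - c → 2 ≤ T i (j + c) := fun i j hj =>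
    hT.two_le_of_content_one_le hlam hlen hone (by omega) (by omega)
  refine ⟨fun i j (hj : j < lam i - c) => ?_, fun i j (hj : j + 1 < lam i - c) => ?_,
    fun i j (hj : j < lam (i + 1) - c) => ?_, fun i j (hj : lam i - c ≤ j) => ?_⟩
  · rw [deleteColumns, if_pos hj]
    have := htwo i j hj
    omega
  · rw [deleteColumns, deleteColumns, if_pos (by omega), if_pos hj]
    have := hT.2.1 i (j + c) (by omega)
    rw [show j + c + 1 = j + 1 + c by omega] at this
    omega
  · have hj' : j < lam i - c := lt_of_lt_of_le hj (Nat.sub_le_sub_right (hlam (Nat.le_succ i)) c)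
    rw [deleteColumns, deleteColumns, if_pos hj', if_pos hj]
    have := hT.2.2.1 i (j + c) (by omega)
    have := htwo i j hj'
    omega
  · rw [deleteColumns, if_neg (by omega)]

theorem exists_eq_attachColumns_deleteColumns (hT : IsSSYT lam T) (hlam : Antitone lam)
    (hlen : ∀ i, r ≤ i → lam i = 0) (hc : ∀ i < r, c ≤ lam i)
    (hTr : ∀ i j, j < lam i → T i j ≤ r + 1) :
    ∃ b, Antitone b ∧ b 0 = c ∧ b (r + 1) = 0 ∧
      T = attachColumns c b lam (deleteColumns c lam T) := by
  have hrow : ∀ {i j}, j < lam i → i < r := fun {i j} hj => by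
    by_contra h; have := hlen i (by omega); omega
  have hzero : ∀ i j, lam i ≤ j → T i j = 0 := hT.2.2.2
  -- Below `T i j` the column increases strictly down to row `r - 1`, staying `≤ r + 1`.
  have hleft : ∀ i j, i < r → j < c → T i j = i + 1 ∨ T i j = i + 2 := by
    intro i j hi hj
    have hjr : j < lam (i + (r - 1 - i)) := by
      rw [show i + (r - 1 - i) = r - 1 by omega]
      exact lt_of_lt_of_le hj (hc _ (by omega))
    have := hT.add_le_below hlam hjr
    have := hTr _ _ hjr
    have := hT.row_lt hlam (lt_of_lt_of_le hj (hc i hi))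
    omega
  refine ⟨fun k => if k = 0 then c else Nat.count (fun j => T (k - 1) j = k) c,
    antitone_nat_of_succ_le fun k => ?_, if_pos rfl, ?_, ?_⟩
  · rcases k with _ | k
    · simp only [Nat.zero_add, Nat.one_ne_zero, if_false, if_true]
      exact Nat.count_le _
    · simp only [Nat.add_one_ne_zero, if_false, Nat.add_sub_cancel]
      refine Nat.count_mono_left fun j hj hTj => ?_
      have hjk : j < lam (k + 1) := by by_contra h; have := hzero (k + 1) j (by omega); omega
      have := hT.2.2.1 k j hjk
      have := hT.row_lt hlam (lt_of_lt_of_le hjk (hlam (Nat.le_succ k)))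
      omega
  · simp only [Nat.add_one_ne_zero, if_false, Nat.add_sub_cancel]
    exact Nat.count_of_forall_not fun j _ => by rw [hzero r j (by rw [hlen r le_rfl]; omega)]; omega
  · funext i j
    rcases Nat.lt_or_ge j (lam i) with hj | hj
    · have hi := hrow hj
      rcases Nat.lt_or_ge j c with hjc | hjc
      · rw [attachColumns_of_lt_of_lt hj hjc, if_neg (Nat.add_one_ne_zero i), Nat.add_sub_cancel]
        have hiff := Nat.eq_iff_lt_count_of_monotoneOn (f := T i) (v := i + 1)
          (fun _ _ k hk hjk => hT.row_mono hjk (lt_of_lt_of_le hk (hc i hi)))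
          (fun j hj => hT.row_lt hlam (lt_of_lt_of_le hj (hc i hi))) hjc
        rcases hleft i j hi hjc with h | h
        · rw [if_pos (hiff.1 h), h]
        · rw [if_neg fun hlt => by have := hiff.2 hlt; omega, h]
      · have := hT.1 i j hj
        obtain ⟨d, rfl⟩ : ∃ d, j = c + d := ⟨j - c, by omega⟩
        rw [attachColumns_add (by omega), deleteColumns, if_pos (by omega), Nat.add_comm d c,
          Nat.sub_add_cancel this]
    · rw [attachColumns, if_neg (by omega), hzero i j hj]

end DeleteColumns

/-- With `m_u` the number of entries `u` of `S`, attaching columns with profile `b` gives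
`b k + (c - b (k - 1)) + m_{k-1}` entries `k`; asking for `n` of each and `b (r + 1) = 0`
forces `b k = ∑_{u=k}^{r} (c - n + m_u)`. -/
noncomputable def columnProfile (r n c : ℕ) (lam : ℕ → ℕ) (S : ℕ → ℕ → ℕ) (k : ℕ) : ℕ :=
  ∑ u ∈ Ico k (r + 1), (c - n + content (fun i => lam i - c) S u)

section ColumnProfile

variable {r n c : ℕ} {lam : ℕ → ℕ} {S : ℕ → ℕ → ℕ}

theorem antitone_columnProfile : Antitone (columnProfile r n c lam S) :=
  fun _ _ hkl => sum_le_sum_of_subset (Ico_subset_Ico_left hkl)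

theorem columnProfile_succ_self : columnProfile r n c lam S (r + 1) = 0 := by
  simp [columnProfile]

theorem columnProfile_eq_add {k : ℕ} (hk : k ≤ r) :
    columnProfile r n c lam S k =
      (c - n + content (fun i => lam i - c) S k) + columnProfile r n c lam S (k + 1) :=
  sum_eq_sum_Ico_succ_bot (by omega) _

theorem columnProfile_zero (hlen : ∀ i, r ≤ i → lam i = 0) (hc : ∀ i < r, c ≤ lam i)
    (hnc : n ≤ c) (hwt : ∑ i ∈ range r, lam i = n * (r + 1))
    (hS : ∀ i j, j < lam i - c → S i j ≤ r) :
    columnProfile r n c lam S 0 = c := by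
  have hmu : ∀ i, r ≤ i → lam i - c = 0 := fun i hi => by rw [hlen i hi, Nat.zero_sub]
  have hsplit : ∑ i ∈ range r, (lam i - c + c) = ∑ i ∈ range r, lam i :=
    sum_congr rfl fun i hi => Nat.sub_add_cancel (hc i (mem_range.1 hi))
  rw [sum_add_distrib, sum_const, card_range, smul_eq_mul] at hsplit
  obtain ⟨d, rfl⟩ := Nat.exists_eq_add_of_le hnc
  rw [columnProfile, ← range_eq_Ico, sum_add_distrib, sum_const, card_range, smul_eq_mul,
    sum_content hmu hS, Nat.add_sub_cancel_left]
  linarith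

theorem content_attachColumns_columnProfile (hlen : ∀ i, r ≤ i → lam i = 0)
    (hc : ∀ i < r, c ≤ lam i) (hnc : n ≤ c) (hwt : ∑ i ∈ range r, lam i = n * (r + 1))
    (hS : ∀ i j, j < lam i - c → S i j ≤ r) {k : ℕ} (hk : 1 ≤ k) (hkr : k ≤ r + 1) :
    content lam (attachColumns c (columnProfile r n c lam S) lam S) k = n := by
  have hb0 := columnProfile_zero hlen hc hnc hwt hS
  have hstep := columnProfile_eq_add (n := n) (c := c) (lam := lam) (S := S)
    (show k - 1 ≤ r by omega)
  have hbc := hb0 ▸ antitone_columnProfile (r := r) (n := n) (c := c) (lam := lam) (S := S)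
    (Nat.zero_le (k - 1))
  rw [Nat.sub_add_cancel hk] at hstep
  rw [content_attachColumns hlen hc antitone_columnProfile hb0 columnProfile_succ_self hk hkr]
  omega

end ColumnProfile

theorem bijOn_attachColumns_columnProfile {r n c : ℕ} {lam : ℕ → ℕ} (hlam : Antitone lam)
    (hlen : ∀ i, r ≤ i → lam i = 0) (hc : ∀ i < r, c ≤ lam i) (hnc : n ≤ c)
    (hwt : ∑ i ∈ range r, lam i = n * (r + 1)) :
    Set.BijOn (fun S => attachColumns c (columnProfile r n c lam S) lam S)
      {S | IsSSYT (fun i => lam i - c) S ∧ ∀ i j, j < lam i - c → S i j ≤ r}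
      {T | IsSSYT lam T ∧ (∀ i j, j < lam i → T i j ≤ r + 1) ∧
        ∀ v, 1 ≤ v → v ≤ r + 1 → content lam T v = n} := by
  refine ⟨fun S ⟨hS, hSr⟩ => ⟨isSSYT_attachColumns hlam antitone_columnProfile hS,
    fun i j => attachColumns_le hlen hSr,
    fun k hk hkr => content_attachColumns_columnProfile hlen hc hnc hwt hSr hk hkr⟩,
    fun S hS S' hS' h => ?_, fun T ⟨hT, hTr, hTn⟩ => ?_⟩
  · rw [← deleteColumns_attachColumns hS.1.2.2.2, ← deleteColumns_attachColumns hS'.1.2.2.2]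
    exact congrArg (deleteColumns c lam) h
  · obtain ⟨b, hb, hb0, hbr, hTb⟩ :=
      exists_eq_attachColumns_deleteColumns hT hlam hlen hc hTr
    set S := deleteColumns c lam T
    have hSr : ∀ i j, j < lam i - c → S i j ≤ r := fun i j hj => by
      have := hTr i (j + c) (by omega)
      simp only [S, deleteColumns, if_pos hj]
      omega
    have hone : content lam T 1 ≤ c := (hTn 1 le_rfl (by omega)).trans_le hnc
    refine ⟨S, ⟨isSSYT_deleteColumns hT hlam hlen hone, hSr⟩, ?_⟩
    calc attachColumns c (columnProfile r n c lam S) lam S = attachColumns c b lam S :=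
          attachColumns_eq_of_content hlen hc antitone_columnProfile hb
            (columnProfile_zero hlen hc hnc hwt hSr) hb0 columnProfile_succ_self hbr
            fun k hk hkr => by
              rw [content_attachColumns_columnProfile hlen hc hnc hwt hSr hk hkr, ← hTb,
                hTn k hk hkr]
      _ = T := hTb.symm

theorem kostka_eq_ssytCount_of_deleteColumns_general
    (r n : ℕ) (lam : ℕ → ℕ)
    (hdec : ∀ i, lam (i + 1) ≤ lam i)
    (hlen : ∀ i, r ≤ i → lam i = 0)
    (hwt : ∑ i ∈ Finset.range r, lam i = n * (r + 1))
    (hlast : n ≤ lam (r - 1)) :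
    kostka lam n (r + 1) = ssytCount (fun i => lam i - lam (r - 1)) r := by
  have hlam : Antitone lam := antitone_nat_of_succ_le hdec
  exact ((bijOn_attachColumns_columnProfile hlam hlen (fun i hi => hlam (by omega)) hlast
    hwt).ncard_eq).symm

/-- Let `r ≥ 1`, `n ≥ 0`, and let `λ` be a partition with `|λ| = n(r+1)`,
`ℓ(λ) ≤ r` and `λ_r ≥ n`.  Let `μ = (λ_1 - λ_r, …, λ_{r-1} - λ_r)` be obtained from `λ` by
deleting its first `λ_r` columns.  Then `K_{λ,(n)^{r+1}}` equals the number of SSYT of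
shape `μ` with entries in `{1, …, r}`.  (Rows are 0-indexed: `lam i` is `λ_{i+1}`.) -/
theorem kostka_eq_ssytCount_of_deleteColumns
    (r n : ℕ) (hr : 1 ≤ r) (lam : ℕ → ℕ)
    (hdec : ∀ i, lam (i + 1) ≤ lam i)
    (hlen : ∀ i, r ≤ i → lam i = 0)
    (hwt : ∑ i ∈ Finset.range r, lam i = n * (r + 1))
    (hlast : n ≤ lam (r - 1)) :
    kostka lam n (r + 1) = ssytCount (fun i => lam i - lam (r - 1)) r :=
  kostka_eq_ssytCount_of_deleteColumns_general r n lam hdec hlen hwt hlast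
end

section
/- Let r, m ≥ 1 be integers. If T and T′ are SSYT of rectangular shape (m, m, …, m) (r rows, each of length m) with entries in {1, …, r+1}, and for each value i ∈ {1, …, r+1} the number of occurrences of i in T equals the number of occurrences of i in T′, then T = T′. In other words, a semistandard filling of an r × m rectangle with entries in {1, …, r+1} is uniquely determined by its content. -/
open Finset

/-!
Column strictness and the bound `r + 1` force row `i` (counted from `0`) of such a tableau to
contain only the values `i + 1` and `i + 2`, and since rows weakly increase, a row is determined
by how many entries `i + 1` it has. The value `i + 1` occurs only in rows `i - 1` and `i`, so
once the rows above row `i` are known, the content of `i + 1` determines row `i`.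
-/

theorem eq_iff_lt_card_filter_eq {f : ℕ → ℕ} {a m j : ℕ} (hf : MonotoneOn f (Set.Iio m))
    (ha : ∀ k < m, a ≤ f k) (hj : j < m) : f j = a ↔ j < #{k ∈ range m | f k = a} := by
  constructor
  · intro hfj
    have hsub : range (j + 1) ⊆ {k ∈ range m | f k = a} := by
      intro k hk
      rw [mem_range] at hk
      have hkj := hf (Set.mem_Iio.2 (show k < m by omega)) hj (by omega)
      have hak := ha k (by omega)
      simp only [mem_filter, mem_range]
      omega
    simpa using card_le_card hsub
  · intro hlt
    by_contra hfj
    have hsub : {k ∈ range m | f k = a} ⊆ range j := by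
      intro k hk
      simp only [mem_filter, mem_range] at hk ⊢
      by_contra hkj
      have hjk := hf hj hk.1 (by omega)
      have haj := ha j hj
      omega
    exact (card_le_card hsub).trans_eq (card_range j) |>.not_gt hlt

theorem eqOn_of_card_filter_eq {f g : ℕ → ℕ} {a m : ℕ}
    (hf : MonotoneOn f (Set.Iio m)) (hg : MonotoneOn g (Set.Iio m))
    (hfa : ∀ j < m, a ≤ f j ∧ f j ≤ a + 1) (hga : ∀ j < m, a ≤ g j ∧ g j ≤ a + 1)
    (hcard : #{j ∈ range m | f j = a} = #{j ∈ range m | g j = a}) :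
    Set.EqOn f g (Set.Iio m) := by
  intro j hj
  have hf_iff := eq_iff_lt_card_filter_eq hf (fun k hk => (hfa k hk).1) hj
  have hg_iff := eq_iff_lt_card_filter_eq hg (fun k hk => (hga k hk).1) hj
  rw [hcard, ← hg_iff] at hf_iff
  have hfj := hfa j hj
  have hgj := hga j hj
  omega

namespace IsSSYT

variable {lam : ℕ → ℕ} {T : ℕ → ℕ → ℕ}

theorem monotoneOn_row (hT : IsSSYT lam T) (i : ℕ) : MonotoneOn (T i) (Set.Iio (lam i)) := by
  intro j _ k hk hjk
  induction k, hjk using Nat.le_induction with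
  | base => exact le_rfl
  | succ k _ ih => exact (ih (by simp only [Set.mem_Iio] at hk ⊢; omega)).trans (hT.2.1 i k hk)

theorem add_le_of_antitone (hT : IsSSYT lam T) (hlam : Antitone lam) {i j : ℕ} (d : ℕ)
    (hj : j < lam (i + d)) : T i j + d ≤ T (i + d) j := by
  induction d with
  | zero => simp
  | succ d ih =>
    have hstep := hT.2.2.1 (i + d) j hj
    have hprev := ih (hj.trans_le (hlam (by omega)))
    show T i j + (d + 1) ≤ T (i + d + 1) j
    omega

theorem succ_le_of_antitone (hT : IsSSYT lam T) (hlam : Antitone lam) {i j : ℕ}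
    (hj : j < lam i) : i + 1 ≤ T i j := by
  have hpos := hT.1 0 j (hj.trans_le (hlam (Nat.zero_le i)))
  have hcol := hT.add_le_of_antitone hlam (i := 0) i (by rwa [zero_add])
  rw [zero_add] at hcol
  omega

end IsSSYT

section Rectangle

variable {r m : ℕ} {T : ℕ → ℕ → ℕ}

theorem antitone_rect (r m : ℕ) : Antitone (fun i => if i < r then m else 0) := by
  intro a b hab
  dsimp only
  split_ifs <;> omega

theorem content_rect (v : ℕ) :
    content (fun i => if i < r then m else 0) T v
      = ∑ i ∈ range r, #{j ∈ range m | T i j = v} := by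
  have hset : {p : ℕ × ℕ | p.2 < (if p.1 < r then m else 0) ∧ T p.1 p.2 = v}
      = ↑{p ∈ range r ×ˢ range m | T p.1 p.2 = v} := by
    ext ⟨i, j⟩
    simp only [Set.mem_ofPred_eq, coe_filter, mem_product, mem_range]
    by_cases h : i < r <;> simp [h]
  rw [content, hset, Set.ncard_coe_finset, card_filter, sum_product]
  exact sum_congr rfl fun i _ => (card_filter _ _).symm

theorem IsSSYT.rect_entry_bounds (hT : IsSSYT (fun i => if i < r then m else 0) T)
    (hTle : ∀ i j, i < r → j < m → T i j ≤ r + 1) {i j : ℕ} (hi : i < r) (hj : j < m) :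
    i + 1 ≤ T i j ∧ T i j ≤ i + 2 := by
  refine ⟨hT.succ_le_of_antitone (antitone_rect r m) (by simpa [hi] using hj), ?_⟩
  have hlast : i + (r - 1 - i) < r := by omega
  have hcol := hT.add_le_of_antitone (antitone_rect r m) (i := i) (r - 1 - i)
    (by simpa [hlast] using hj)
  have hbound := hTle _ j hlast hj
  omega

/-- The value `i + 1` does not occur below row `i`. -/
theorem IsSSYT.content_rect_succ (hT : IsSSYT (fun i => if i < r then m else 0) T)
    {i : ℕ} (hi : i < r) :
    content (fun i => if i < r then m else 0) T (i + 1)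
      = ∑ k ∈ range (i + 1), #{j ∈ range m | T k j = i + 1} := by
  rw [content_rect]
  refine (sum_subset (range_subset_range.2 hi) fun k hk hki => ?_).symm
  rw [card_eq_zero, filter_eq_empty_iff]
  intro j hj
  simp only [mem_range] at hk hki hj
  have hlow := hT.succ_le_of_antitone (antitone_rect r m) (i := k) (j := j)
    (by simpa [hk] using hj)
  omega

end Rectangle

theorem rectangular_ssyt_determined_by_content_general
    (r m : ℕ)
    (T T' : ℕ → ℕ → ℕ)
    (hT : IsSSYT (fun i => if i < r then m else 0) T)
    (hT' : IsSSYT (fun i => if i < r then m else 0) T')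
    (hTle : ∀ i j, i < r → j < m → T i j ≤ r + 1)
    (hT'le : ∀ i j, i < r → j < m → T' i j ≤ r + 1)
    (hcont : ∀ v, 1 ≤ v → v ≤ r + 1 →
      content (fun i => if i < r then m else 0) T v =
      content (fun i => if i < r then m else 0) T' v) :
    T = T' := by
  have hrows : ∀ i < r, Set.EqOn (T i) (T' i) (Set.Iio m) := by
    intro i
    induction i using Nat.strong_induction_on with
    | _ i ih =>
      intro hi
      have hcount := hcont (i + 1) (by omega) (by omega)
      rw [hT.content_rect_succ hi, hT'.content_rect_succ hi, sum_range_succ, sum_range_succ,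
        sum_congr rfl fun k hk => congrArg card <| filter_congr fun j hj => by
          rw [ih k (mem_range.1 hk) ((mem_range.1 hk).trans hi) (mem_range.1 hj)]] at hcount
      exact eqOn_of_card_filter_eq (by simpa [hi] using hT.monotoneOn_row i)
        (by simpa [hi] using hT'.monotoneOn_row i) (fun j hj => hT.rect_entry_bounds hTle hi hj)
        (fun j hj => hT'.rect_entry_bounds hT'le hi hj) (add_left_cancel hcount)
  funext i j
  by_cases hij : i < r ∧ j < m
  · exact hrows i hij.1 hij.2
  · have hout : (if i < r then m else 0) ≤ j := by split_ifs <;> omega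
    rw [hT.2.2.2 i j hout, hT'.2.2.2 i j hout]

/-- A semistandard filling of an `r × m` rectangle with entries in
`{1, …, r+1}` is uniquely determined by its content: if `T` and `T'` are SSYT of the
rectangular shape with `r` rows of length `m`, with entries in `{1, …, r+1}`, and each
value `v ∈ {1, …, r+1}` occurs in `T` as often as in `T'`, then `T = T'`. -/
theorem rectangular_ssyt_determined_by_content
    (r m : ℕ) (hr : 1 ≤ r) (hm : 1 ≤ m)
    (T T' : ℕ → ℕ → ℕ)
    (hT : IsSSYT (fun i => if i < r then m else 0) T)
    (hT' : IsSSYT (fun i => if i < r then m else 0) T')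
    (hTle : ∀ i j, i < r → j < m → T i j ≤ r + 1)
    (hT'le : ∀ i j, i < r → j < m → T' i j ≤ r + 1)
    (hcont : ∀ v, 1 ≤ v → v ≤ r + 1 →
      content (fun i => if i < r then m else 0) T v =
      content (fun i => if i < r then m else 0) T' v) :
    T = T' :=
  rectangular_ssyt_determined_by_content_general r m T T' hT hT' hTle hT'le hcont
end

section
/- Let r ≥ 2, p ≥ 1, and n ≥ 0 be integers, and let λ be a partition with |λ| = n(r+1), ℓ(λ) ≤ r, and λ_r < n. Set a_i = λ_i − λ_{i+1} for 1 ≤ i ≤ r−1. Then Σ_{i=1}^{r−1} i a_i > n, and moreover, as rational numbers, (p/2) · ( Σ_{1 ≤ i ≤ r−1} Σ_{1 ≤ j ≤ r−1} a_i a_j (min(i,j) − ij/r) + Σ_{i=1}^{r−1} i(r−i) a_i ) − (1/2) Σ_{i=1}^{r−1} i a_i ≥ ( p/(2r) + (p−1)/2 ) · n. -/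
open Finset

/-!
With `a_i = λ_i - λ_{i+1} ≥ 0` and `S = Σ i a_i`, Abel summation gives
`S = |λ| - r λ_r = n(r+1) - r λ_r ≥ n + r`. The linear term `Σ i(r-i) a_i` dominates `S`
because `r - i ≥ 1`, and the quadratic form dominates `S² / (r(r-1))` termwise because
`ij ≤ min(i,j)(r-1)`; since `(n+r)² ≥ n(r-1)`, the quadratic form is at least `n/r`.
-/

theorem sum_Icc_mul_sub_eq {R : Type*} [CommRing R] (f : ℕ → R) (m : ℕ) :
    ∑ i ∈ Icc 1 m, (i : R) * (f (i - 1) - f i) = ∑ i ∈ range (m + 1), f i - (m + 1) * f m := by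
  induction m with
  | zero => simp
  | succ m ih =>
    rw [sum_Icc_succ_top (Nat.le_add_left 1 m), ih, sum_range_succ _ (m + 1), Nat.add_sub_cancel]
    push_cast
    ring

theorem Nat.mul_le_min_mul {i j k : ℕ} (hi : i ≤ k) (hj : j ≤ k) : i * j ≤ min i j * k :=
  calc i * j = min i j * max i j := (min_mul_max i j).symm
    _ ≤ min i j * k := Nat.mul_le_mul_left _ (max_le hi hj)

section

variable {K : Type*} [Field K] [LinearOrder K] [IsStrictOrderedRing K]

theorem mul_le_half_mul_add_sub_half {p r n S T Q : K} (hp : 1 ≤ p) (hr : 1 < r) (hn : 0 ≤ n)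
    (hS : n + r ≤ S) (hT : S ≤ T) (hQ : S ^ 2 ≤ Q * (r * (r - 1))) :
    (p / (2 * r) + (p - 1) / 2) * n ≤ p / 2 * (Q + T) - 1 / 2 * S := by
  have hr0 : 0 < r := by linarith
  have hnQ : n / r ≤ Q := by
    rw [div_le_iff₀ hr0]
    refine le_of_mul_le_mul_right ?_ (sub_pos.2 hr)
    nlinarith
  have hsplit : p / 2 * (Q + T) - 1 / 2 * S - (p / (2 * r) + (p - 1) / 2) * n =
      p / 2 * (Q - n / r) + p / 2 * (T - S) + (p - 1) / 2 * (S - n) := by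
    field_simp
    ring
  have h1 : 0 ≤ p / 2 * (Q - n / r) := mul_nonneg (by linarith) (sub_nonneg.2 hnQ)
  have h2 : 0 ≤ p / 2 * (T - S) := mul_nonneg (by linarith) (sub_nonneg.2 hT)
  have h3 : 0 ≤ (p - 1) / 2 * (S - n) := mul_nonneg (by linarith) (by linarith)
  linarith

theorem add_le_sum_Icc_mul_sub (r n : ℕ) (hr : 1 ≤ r) (lam : ℕ → ℕ)
    (hwt : ∑ i ∈ range r, lam i = n * (r + 1)) (hlast : lam (r - 1) < n) :
    (n : K) + r ≤ ∑ i ∈ Icc 1 (r - 1), (i : K) * ((lam (i - 1) : K) - lam i) := by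
  have hwtK : ∑ i ∈ range r, (lam i : K) = n * (r + 1) := by exact_mod_cast hwt
  have hlastK : (lam (r - 1) : K) + 1 ≤ n := by exact_mod_cast hlast
  have hrK : ((r - 1 : ℕ) : K) + 1 = r := by rw [Nat.cast_sub hr, Nat.cast_one, sub_add_cancel]
  rw [sum_Icc_mul_sub_eq (fun i => (lam i : K)), Nat.sub_add_cancel hr, hwtK, hrK]
  nlinarith [mul_le_mul_of_nonneg_left hlastK (Nat.cast_nonneg (α := K) r)]

variable (r : ℕ) (a : ℕ → K)

theorem sum_mul_le_sum_mul_sub_mul (ha : ∀ i ∈ Icc 1 (r - 1), 0 ≤ a i) :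
    ∑ i ∈ Icc 1 (r - 1), (i : K) * a i ≤ ∑ i ∈ Icc 1 (r - 1), (i : K) * (r - i) * a i := by
  refine sum_le_sum fun i hi => ?_
  have hir : (i : K) + 1 ≤ r := by
    have := mem_Icc.1 hi
    exact_mod_cast (by omega : i + 1 ≤ r)
  nlinarith [mul_nonneg (mul_nonneg i.cast_nonneg (ha i hi)) (sub_nonneg.2 hir)]

/-- The quadratic form `Σ a_i a_j (min(i,j) - ij/r)` is the one of the weight lattice of `sl_r`. -/
theorem sq_sum_mul_le_sum_sum_mul_min_sub (hr : 0 < r) (ha : ∀ i ∈ Icc 1 (r - 1), 0 ≤ a i) :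
    (∑ i ∈ Icc 1 (r - 1), (i : K) * a i) ^ 2 ≤
      (∑ i ∈ Icc 1 (r - 1), ∑ j ∈ Icc 1 (r - 1),
        a i * a j * (((min i j : ℕ) : K) - i * j / r)) * (r * (r - 1)) := by
  have hrK : (0 : K) < r := by exact_mod_cast hr
  rw [sq, sum_mul_sum, sum_mul]
  refine sum_le_sum fun i hi => ?_
  rw [sum_mul]
  refine sum_le_sum fun j hj => ?_
  have hmin : (i : K) * j ≤ ((min i j : ℕ) : K) * (r - 1) := by
    have := Nat.mul_le_min_mul (mem_Icc.1 hi).2 (mem_Icc.1 hj).2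
    rw [← Nat.cast_one, ← Nat.cast_sub hr, ← Nat.cast_mul, ← Nat.cast_mul]
    exact_mod_cast this
  have hexpand : a i * a j * (((min i j : ℕ) : K) - i * j / r) * (r * (r - 1)) =
      i * a i * (j * a j) + a i * a j * r * (((min i j : ℕ) : K) * (r - 1) - i * j) := by
    field_simp
    ring
  rw [hexpand]
  have := mul_nonneg (mul_nonneg (mul_nonneg (ha i hi) (ha j hj)) hrK.le) (sub_nonneg.2 hmin)
  linarith

end

theorem lowest_exponent_bound_general
    (r p n : ℕ) (hr : 2 ≤ r) (hp : 1 ≤ p) (lam : ℕ → ℕ)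
    (hdec : ∀ i, lam (i + 1) ≤ lam i)
    (hwt : ∑ i ∈ Finset.range r, lam i = n * (r + 1))
    (hlast : lam (r - 1) < n) :
    ((n : ℚ) < ∑ i ∈ Finset.Icc 1 (r - 1),
        (i : ℚ) * ((lam (i - 1) : ℚ) - (lam i : ℚ))) ∧
    ((p : ℚ) / 2 *
        ((∑ i ∈ Finset.Icc 1 (r - 1), ∑ j ∈ Finset.Icc 1 (r - 1),
            ((lam (i - 1) : ℚ) - (lam i : ℚ)) * ((lam (j - 1) : ℚ) - (lam j : ℚ))
              * (((min i j : ℕ) : ℚ) - (i : ℚ) * (j : ℚ) / (r : ℚ)))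
          + ∑ i ∈ Finset.Icc 1 (r - 1),
              (i : ℚ) * ((r : ℚ) - (i : ℚ)) * ((lam (i - 1) : ℚ) - (lam i : ℚ)))
      - 1 / 2 * ∑ i ∈ Finset.Icc 1 (r - 1), (i : ℚ) * ((lam (i - 1) : ℚ) - (lam i : ℚ))
      ≥ ((p : ℚ) / (2 * (r : ℚ)) + ((p : ℚ) - 1) / 2) * (n : ℚ)) := by
  have ha : ∀ i ∈ Icc 1 (r - 1), (0 : ℚ) ≤ (lam (i - 1) : ℚ) - lam i := fun i hi => by
    have := hdec (i - 1)
    rw [Nat.sub_add_cancel (mem_Icc.1 hi).1] at this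
    exact sub_nonneg.2 (by exact_mod_cast this)
  have hS := add_le_sum_Icc_mul_sub (K := ℚ) r n (by omega) lam hwt hlast
  have hrQ : (1 : ℚ) < r := by exact_mod_cast hr
  refine ⟨by linarith, ?_⟩
  exact mul_le_half_mul_add_sub_half (by exact_mod_cast hp) hrQ n.cast_nonneg hS
    (sum_mul_le_sum_mul_sub_mul r _ ha) (sq_sum_mul_le_sum_sum_mul_min_sub r _ (by omega) ha)

/-- Let `r ≥ 2`, `p ≥ 1`, `n ≥ 0`, and let `λ` be a partition with
`|λ| = n(r+1)`, `ℓ(λ) ≤ r` and `λ_r < n`.  With `a_i = λ_i - λ_{i+1}` (`1 ≤ i ≤ r-1`,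
so `a_i = lam (i-1) - lam i` in the 0-indexed convention), we have
`Σ_{i=1}^{r-1} i a_i > n`, and moreover, in `ℚ`,
`(p/2)(Σ_{1≤i,j≤r-1} a_i a_j (min(i,j) - ij/r) + Σ_{i=1}^{r-1} i(r-i) a_i)
   - (1/2) Σ_{i=1}^{r-1} i a_i  ≥  (p/(2r) + (p-1)/2) n`. -/
theorem lowest_exponent_bound
    (r p n : ℕ) (hr : 2 ≤ r) (hp : 1 ≤ p) (lam : ℕ → ℕ)
    (hdec : ∀ i, lam (i + 1) ≤ lam i)
    (hlen : ∀ i, r ≤ i → lam i = 0)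
    (hwt : ∑ i ∈ Finset.range r, lam i = n * (r + 1))
    (hlast : lam (r - 1) < n) :
    ((n : ℚ) < ∑ i ∈ Finset.Icc 1 (r - 1),
        (i : ℚ) * ((lam (i - 1) : ℚ) - (lam i : ℚ))) ∧
    ((p : ℚ) / 2 *
        ((∑ i ∈ Finset.Icc 1 (r - 1), ∑ j ∈ Finset.Icc 1 (r - 1),
            ((lam (i - 1) : ℚ) - (lam i : ℚ)) * ((lam (j - 1) : ℚ) - (lam j : ℚ))
              * (((min i j : ℕ) : ℚ) - (i : ℚ) * (j : ℚ) / (r : ℚ)))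
          + ∑ i ∈ Finset.Icc 1 (r - 1),
              (i : ℚ) * ((r : ℚ) - (i : ℚ)) * ((lam (i - 1) : ℚ) - (lam i : ℚ)))
      - 1 / 2 * ∑ i ∈ Finset.Icc 1 (r - 1), (i : ℚ) * ((lam (i - 1) : ℚ) - (lam i : ℚ))
      ≥ ((p : ℚ) / (2 * (r : ℚ)) + ((p : ℚ) - 1) / 2) * (n : ℚ)) :=
  lowest_exponent_bound_general r p n hr hp lam hdec hwt hlast
end
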